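/- arXiv:1809.07275 — 5 statements merged into one kernel-verified Lean document; each statement's English description precedes it below -/
import Mathlib

section
/- If k₃k₁₂ − k₆k₉ < 0, then the polynomial p_η evaluated along the curve x₁ = y, x₂ = 1/y, x₃ = y becomes a univariate polynomial in y whose leading coefficient is K₂²K₄k₃²k₉(k₃k₁₂ − k₆k₉) < 0; in particular there exists a point x ∈ ℝ³_{>0} with p_η(x) < 0. -/
/-- The polynomial `p_η` of the two-site phosphorylation cycle. -/
noncomputable def pEta (K1 K2 K3 K4 k3 k6 k9 k12 x1 x2 x3 : ℝ) : ℝ :=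
  K2^2*K4*k3^2*k9*(k3*k12 - k6*k9)*x1^4*x3^2
  + K1*K2^2*K4*k3^2*k6*k9^2*x1^4*x3
  + K1*K2*K3*k3*k6*k12*(k3*k12 - k6*k9)*x1^3*x2^2*x3
  + K2^2*K3*k3^2*k12*(k3*k12 - k6*k9)*x1^3*x2*x3^2
  + 2*K1*K2*K3*K4*k3^2*k6*k9*k12*x1^3*x2*x3
  + K1*K2*K3*k3*k6*k12*(k3*k12 - k6*k9)*x1^2*x2^3*x3
  + K1^2*K2*K3*k3*k6^2*k12*(k9 + k12)*x1^2*x2^3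
  + K1*K2*K3*k3*k6*k12*(k3*k12 - k6*k9)*x1^2*x2^2*x3^2
  + K1*K2*K3*k3*k6*k12*((K2 + K3)*k3*k12 - (K1 + K4)*k6*k9)*x1^2*x2^2*x3
  + K1^2*K2*K3*K4*k3*k6^2*k9*k12*x1^2*x2^2
  + K1^2*K3^2*k6^2*k12^2*(k3 + k6)*x1*x2^4
  + 2*K1^2*K2*K3*k3*k6^2*k12^2*x1*x2^3*x3
  + K1^2*K2*K3^2*k3*k6^2*k12^2*x1*x2^3
  + K1^2*K3^2*k6^3*k12^2*x2^4*x3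
  + K1^3*K3^2*k6^3*k12^2*x2^4

theorem stmt_1 (K1 K2 K3 K4 k3 k6 k9 k12 : ℝ)
    (hK1 : 0 < K1) (hK2 : 0 < K2) (hK3 : 0 < K3) (hK4 : 0 < K4)
    (hk3 : 0 < k3) (hk6 : 0 < k6) (hk9 : 0 < k9) (hk12 : 0 < k12)
    (ha : k3*k12 - k6*k9 < 0) :
    (∃ Y : ℝ, 0 < Y ∧ ∀ y : ℝ, Y < y →
        pEta K1 K2 K3 K4 k3 k6 k9 k12 y (1/y) y < 0) ∧
    ∃ x1 x2 x3 : ℝ, 0 < x1 ∧ 0 < x2 ∧ 0 < x3 ∧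
      pEta K1 K2 K3 K4 k3 k6 k9 k12 x1 x2 x3 < 0 := by
  have hd : 0 < k6*k9 - k3*k12 := by linarith
  -- the positive leading coefficient of the negated leading term
  have hc : 0 < K2^2*K4*k3^2*k9*(k6*k9 - k3*k12) := by positivity
  obtain ⟨c, hc, hc_def⟩ : ∃ c : ℝ, 0 < c ∧ c = K2^2*K4*k3^2*k9*(k6*k9 - k3*k12) :=
    ⟨_, hc, rfl⟩
  -- bound on the sum of lower-order positive coefficients
  obtain ⟨M, hM_def⟩ : ∃ M : ℝ, M = K1*K2^2*K4*k3^2*k6*k9^2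
      + 2*K1*K2*K3*K4*k3^2*k6*k9*k12
      + K1^2*K2*K3*k3*k6^2*k12*(k9 + k12)
      + K1*K2*K3*k3*k6*k12*((K2 + K3)*k3*k12)
      + K1^2*K2*K3*K4*k3*k6^2*k9*k12
      + K1^2*K3^2*k6^2*k12^2*(k3 + k6)
      + 2*K1^2*K2*K3*k3*k6^2*k12^2
      + K1^2*K2*K3^2*k3*k6^2*k12^2
      + K1^2*K3^2*k6^3*k12^2
      + K1^3*K3^2*k6^3*k12^2 := ⟨_, rfl⟩
  have key : ∀ y : ℝ, max 1 (M/c) < y →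
      pEta K1 K2 K3 K4 k3 k6 k9 k12 y (1/y) y < 0 := by
    intro y hy
    have hy1 : 1 ≤ y := le_of_lt (lt_of_le_of_lt (le_max_left _ _) hy)
    have hy0 : 0 < y := lt_of_lt_of_le one_pos hy1
    have hyne : y ≠ 0 := ne_of_gt hy0
    have hMc : M/c < y := lt_of_le_of_lt (le_max_right _ _) hy
    have hcy : M < c*y := by
      have := (div_lt_iff₀ hc).mp hMc
      linarith [this]
    -- multiply through by y^4
    have hq : pEta K1 K2 K3 K4 k3 k6 k9 k12 y (1/y) y * y^4 =
        K2^2*K4*k3^2*k9*(k3*k12 - k6*k9)*y^10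
        + K1*K2^2*K4*k3^2*k6*k9^2*y^9
        + K1*K2*K3*k3*k6*k12*(k3*k12 - k6*k9)*y^6
        + K2^2*K3*k3^2*k12*(k3*k12 - k6*k9)*y^8
        + 2*K1*K2*K3*K4*k3^2*k6*k9*k12*y^7
        + K1*K2*K3*k3*k6*k12*(k3*k12 - k6*k9)*y^4
        + K1^2*K2*K3*k3*k6^2*k12*(k9 + k12)*y^3
        + K1*K2*K3*k3*k6*k12*(k3*k12 - k6*k9)*y^6
        + K1*K2*K3*k3*k6*k12*((K2 + K3)*k3*k12 - (K1 + K4)*k6*k9)*y^5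
        + K1^2*K2*K3*K4*k3*k6^2*k9*k12*y^4
        + K1^2*K3^2*k6^2*k12^2*(k3 + k6)*y
        + 2*K1^2*K2*K3*k3*k6^2*k12^2*y^3
        + K1^2*K2*K3^2*k3*k6^2*k12^2*y^2
        + K1^2*K3^2*k6^3*k12^2*y
        + K1^3*K3^2*k6^3*k12^2 := by
      unfold pEta
      field_simp
    -- bounds on each term
    have hle9 : ∀ n : ℕ, n ≤ 9 → y^n ≤ y^9 := fun n hn => pow_le_pow_right₀ hy1 hn
    have h1 : K2^2*K4*k3^2*k9*(k3*k12 - k6*k9)*y^10 = -(c*y^10) := by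
      rw [hc_def]; ring
    have haterm : ∀ n : ℕ, K1*K2*K3*k3*k6*k12*(k3*k12 - k6*k9)*y^n ≤ 0 := by
      intro n
      have h : K1*K2*K3*k3*k6*k12*(k3*k12 - k6*k9)*y^n
          = -(K1*K2*K3*k3*k6*k12*y^n*(k6*k9 - k3*k12)) := by ring
      rw [h, neg_nonpos]
      exact mul_nonneg (by positivity) hd.le
    have h3 := haterm 6
    have h6 := haterm 4
    have h8 := haterm 6
    have h4 : K2^2*K3*k3^2*k12*(k3*k12 - k6*k9)*y^8 ≤ 0 := by
      have h : K2^2*K3*k3^2*k12*(k3*k12 - k6*k9)*y^8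
          = -(K2^2*K3*k3^2*k12*y^8*(k6*k9 - k3*k12)) := by ring
      rw [h, neg_nonpos]
      exact mul_nonneg (by positivity) hd.le
    have h5 : 2*K1*K2*K3*K4*k3^2*k6*k9*k12*y^7 ≤ 2*K1*K2*K3*K4*k3^2*k6*k9*k12*y^9 :=
      mul_le_mul_of_nonneg_left (hle9 7 (by norm_num)) (by positivity)
    have h7 : K1^2*K2*K3*k3*k6^2*k12*(k9 + k12)*y^3
        ≤ K1^2*K2*K3*k3*k6^2*k12*(k9 + k12)*y^9 :=
      mul_le_mul_of_nonneg_left (hle9 3 (by norm_num)) (by positivity)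
    have h9 : K1*K2*K3*k3*k6*k12*((K2 + K3)*k3*k12 - (K1 + K4)*k6*k9)*y^5
        ≤ K1*K2*K3*k3*k6*k12*((K2 + K3)*k3*k12)*y^9 := by
      have hb : (K2 + K3)*k3*k12 - (K1 + K4)*k6*k9 ≤ (K2 + K3)*k3*k12 := by
        have : 0 < (K1 + K4)*k6*k9 := by positivity
        linarith
      have step1 : K1*K2*K3*k3*k6*k12*((K2 + K3)*k3*k12 - (K1 + K4)*k6*k9)*y^5
          ≤ K1*K2*K3*k3*k6*k12*((K2 + K3)*k3*k12)*y^5 := by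
        apply mul_le_mul_of_nonneg_right _ (pow_pos hy0 5).le
        exact mul_le_mul_of_nonneg_left hb (by positivity)
      have step2 : K1*K2*K3*k3*k6*k12*((K2 + K3)*k3*k12)*y^5
          ≤ K1*K2*K3*k3*k6*k12*((K2 + K3)*k3*k12)*y^9 :=
        mul_le_mul_of_nonneg_left (hle9 5 (by norm_num)) (by positivity)
      linarith
    have h10 : K1^2*K2*K3*K4*k3*k6^2*k9*k12*y^4 ≤ K1^2*K2*K3*K4*k3*k6^2*k9*k12*y^9 :=
      mul_le_mul_of_nonneg_left (hle9 4 (by norm_num)) (by positivity)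
    have h11 : K1^2*K3^2*k6^2*k12^2*(k3 + k6)*y ≤ K1^2*K3^2*k6^2*k12^2*(k3 + k6)*y^9 := by
      have : y ≤ y^9 := le_self_pow₀ hy1 (by norm_num)
      exact mul_le_mul_of_nonneg_left this (by positivity)
    have h12 : 2*K1^2*K2*K3*k3*k6^2*k12^2*y^3 ≤ 2*K1^2*K2*K3*k3*k6^2*k12^2*y^9 :=
      mul_le_mul_of_nonneg_left (hle9 3 (by norm_num)) (by positivity)
    have h13 : K1^2*K2*K3^2*k3*k6^2*k12^2*y^2 ≤ K1^2*K2*K3^2*k3*k6^2*k12^2*y^9 :=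
      mul_le_mul_of_nonneg_left (hle9 2 (by norm_num)) (by positivity)
    have h14 : K1^2*K3^2*k6^3*k12^2*y ≤ K1^2*K3^2*k6^3*k12^2*y^9 := by
      have : y ≤ y^9 := le_self_pow₀ hy1 (by norm_num)
      exact mul_le_mul_of_nonneg_left this (by positivity)
    have h15 : K1^3*K3^2*k6^3*k12^2 ≤ K1^3*K3^2*k6^3*k12^2*y^9 := by
      have h1y : (1:ℝ) ≤ y^9 := by simpa using hle9 0 (by norm_num)
      calc K1^3*K3^2*k6^3*k12^2 = K1^3*K3^2*k6^3*k12^2*1 := by ring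
        _ ≤ K1^3*K3^2*k6^3*k12^2*y^9 := mul_le_mul_of_nonneg_left h1y (by positivity)
    have hfinal : -(c*y^10) + M*y^9 < 0 := by
      have hpos : 0 < y^9*(c*y - M) := mul_pos (pow_pos hy0 9) (sub_pos.mpr hcy)
      have hring : y^9*(c*y - M) = c*y^10 - M*y^9 := by ring
      linarith
    have hq_neg : pEta K1 K2 K3 K4 k3 k6 k9 k12 y (1/y) y * y^4 < 0 := by
      rw [hq]
      rw [hM_def] at hfinal
      linarith [h1, h3, h4, h5, h6, h7, h8, h9, h10, h11, h12, h13, h14, h15, hfinal]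
    have hy4 : 0 < y^4 := pow_pos hy0 4
    by_contra hcon
    push_neg at hcon
    -- hcon unusable directly; derive contradiction
    exact absurd hq_neg (not_lt.mpr (mul_nonneg hcon hy4.le))
  constructor
  · exact ⟨max 1 (M/c), lt_of_lt_of_le one_pos (le_max_left _ _), key⟩
  · have hY0 : 0 < max 1 (M/c) := lt_of_lt_of_le one_pos (le_max_left _ _)
    have hYlt : max 1 (M/c) < max 1 (M/c) + 1 := lt_add_one _
    have hy0 : 0 < max 1 (M/c) + 1 := by linarith
    exact ⟨max 1 (M/c) + 1, 1/(max 1 (M/c)+1), max 1 (M/c) + 1, hy0, by positivity, hy0, key _ hYlt⟩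
end

section
/- Substituting K₁ = y³, x₁ = y, x₂ = 1, x₃ = y² into the polynomial p_η (viewed as polynomial in K₁,x₁,x₂,x₃) yields p = y⁷·g(y), where g(y) = −K₂K₃k₃k₆²k₉k₁₂·y³ + k₆(K₂²K₄k₃²k₉² + K₂K₃k₃k₁₂(a + 2k₆k₁₂) + K₃²k₆²k₁₂²)·y² + (K₂²K₄k₃²k₉·a + K₂K₃K₄k₃k₆k₉k₁₂(2k₃+k₆) + K₂K₃k₃k₆k₁₂²(k₃+k₆) + K₃²k₆³k₁₂²)·y + K₃k₁₂(K₂²k₃²(a+k₆k₁₂) + K₃k₆k₁₂(K₂k₃+k₆)(k₃+k₆) − K₂K₄k₃k₆²k₉ + K₂k₃k₆·a), with a = k₃k₁₂ − k₆k₉. -/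
/-- The cubic `g_{η'}` obtained by substituting `K₁ = y³, x₁ = y, x₂ = 1, x₃ = y²`
into `p_η` and dividing by `y⁷`. -/
noncomputable def gEta (K2 K3 K4 k3 k6 k9 k12 y : ℝ) : ℝ :=
  -K2*K3*k3*k6^2*k9*k12*y^3
  + k6*(K2^2*K4*k3^2*k9^2 + K2*K3*k3*k12*((k3*k12 - k6*k9) + 2*k6*k12)
      + K3^2*k6^2*k12^2)*y^2
  + (K2^2*K4*k3^2*k9*(k3*k12 - k6*k9) + K2*K3*K4*k3*k6*k9*k12*(2*k3 + k6)
      + K2*K3*k3*k6*k12^2*(k3 + k6) + K3^2*k6^3*k12^2)*y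
  + K3*k12*(K2^2*k3^2*((k3*k12 - k6*k9) + k6*k12) + K3*k6*k12*(K2*k3 + k6)*(k3 + k6)
      - K2*K4*k3*k6^2*k9 + K2*k3*k6*(k3*k12 - k6*k9))

theorem stmt_5 (K2 K3 K4 k3 k6 k9 k12 : ℝ)
    (hK2 : 0 < K2) (hK3 : 0 < K3) (hK4 : 0 < K4)
    (hk3 : 0 < k3) (hk6 : 0 < k6) (hk9 : 0 < k9) (hk12 : 0 < k12) :
    ∀ y : ℝ, pEta (y^3) K2 K3 K4 k3 k6 k9 k12 y 1 (y^2)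
      = y^7 * gEta K2 K3 K4 k3 k6 k9 k12 y := by
  intro y; unfold pEta gEta; ring
end

section
/- Suppose K₁,K₂,K₃,K₄,k₃,k₆,k₉,k₁₂ > 0 with a = k₃k₁₂ − k₆k₉ ≥ 0 and −b < max(2√(K₁K₄)k₆k₉, 2√(aK₂K₃k₃k₁₂)), where b = (K₂+K₃)k₃k₁₂ − (K₁+K₄)k₆k₉. Then p_η(x₁,x₂,x₃) > 0 for all x₁,x₂,x₃ > 0. -/
set_option maxHeartbeats 1000000 in
theorem stmt_10 (K1 K2 K3 K4 k3 k6 k9 k12 : ℝ)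
    (hK1 : 0 < K1) (hK2 : 0 < K2) (hK3 : 0 < K3) (hK4 : 0 < K4)
    (hk3 : 0 < k3) (hk6 : 0 < k6) (hk9 : 0 < k9) (hk12 : 0 < k12)
    (ha : 0 ≤ k3*k12 - k6*k9)
    (hb : -((K2 + K3)*k3*k12 - (K1 + K4)*k6*k9)
        < max (2*Real.sqrt (K1*K4)*k6*k9)
              (2*Real.sqrt ((k3*k12 - k6*k9)*K2*K3*k3*k12))) :
    ∀ x1 x2 x3 : ℝ, 0 < x1 → 0 < x2 → 0 < x3 →
      0 < pEta K1 K2 K3 K4 k3 k6 k9 k12 x1 x2 x3 := by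
  intro x1 x2 x3 hx1 hx2 hx3
  unfold pEta
  -- nonnegativity facts for the terms containing a = k3*k12 - k6*k9
  have ta1 : 0 ≤ (k3*k12 - k6*k9) * (K2^2*K4*k3^2*k9*x1^4*x3^2) :=
    mul_nonneg ha (by positivity)
  have ta3 : 0 ≤ (k3*k12 - k6*k9) * (K1*K2*K3*k3*k6*k12*x1^3*x2^2*x3) :=
    mul_nonneg ha (by positivity)
  have ta4 : 0 ≤ (k3*k12 - k6*k9) * (K2^2*K3*k3^2*k12*x1^3*x2*x3^2) :=
    mul_nonneg ha (by positivity)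
  have ta6 : 0 ≤ (k3*k12 - k6*k9) * (K1*K2*K3*k3*k6*k12*x1^2*x2^3*x3) :=
    mul_nonneg ha (by positivity)
  have ta8 : 0 ≤ (k3*k12 - k6*k9) * (K1*K2*K3*k3*k6*k12*x1^2*x2^2*x3^2) :=
    mul_nonneg ha (by positivity)
  -- always-positive terms
  have t2 : (0:ℝ) < K1*K2^2*K4*k3^2*k6*k9^2*x1^4*x3 := by positivity
  have t5 : (0:ℝ) < 2*K1*K2*K3*K4*k3^2*k6*k9*k12*x1^3*x2*x3 := by positivity
  have t7 : (0:ℝ) < K1^2*K2*K3*k3*k6^2*k12*(k9 + k12)*x1^2*x2^3 := by positivity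
  have t10 : (0:ℝ) < K1^2*K2*K3*K4*k3*k6^2*k9*k12*x1^2*x2^2 := by positivity
  have t11 : (0:ℝ) < K1^2*K3^2*k6^2*k12^2*(k3 + k6)*x1*x2^4 := by positivity
  have t12 : (0:ℝ) < 2*K1^2*K2*K3*k3*k6^2*k12^2*x1*x2^3*x3 := by positivity
  have t13 : (0:ℝ) < K1^2*K2*K3^2*k3*k6^2*k12^2*x1*x2^3 := by positivity
  have t14 : (0:ℝ) < K1^2*K3^2*k6^3*k12^2*x2^4*x3 := by positivity
  have t15 : (0:ℝ) < K1^3*K3^2*k6^3*k12^2*x2^4 := by positivity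
  rcases le_or_gt 0 ((K2 + K3)*k3*k12 - (K1 + K4)*k6*k9) with hb0 | hbneg
  · -- b ≥ 0 : every term is nonnegative, some are positive
    have tb : 0 ≤ ((K2 + K3)*k3*k12 - (K1 + K4)*k6*k9) * (K1*K2*K3*k3*k6*k12*x1^2*x2^2*x3) :=
      mul_nonneg hb0 (by positivity)
    linarith [ta1, ta3, ta4, ta6, ta8, tb, t2, t5, t7, t10, t11, t12, t13, t14, t15]
  · rcases lt_max_iff.mp hb with h | h
    · -- case A : -b < 2√(K1K4) k6 k9
      set s := Real.sqrt (K1*K4) with hsdef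
      have hs2 : s^2 = K1*K4 := Real.sq_sqrt (by positivity)
      have hb2 : 0 < ((K2 + K3)*k3*k12 - (K1 + K4)*k6*k9) + 2*s*k6*k9 := by linarith
      have hT : (0:ℝ) < K2*K3*k3*k12*x1^2*x2^2 := by positivity
      have e : s^2*K2^2*k3^2*k9^2*x1^4 = K1*K4*K2^2*k3^2*k9^2*x1^4 := by
        linear_combination (K2^2*k3^2*k9^2*x1^4) * hs2
      have idA : K1 * (K2^2*K4*k3^2*k9^2*x1^4 + K1*K3^2*k6^2*k12^2*x2^4
            + K2*K3*k3*k12*((K2 + K3)*k3*k12 - (K1 + K4)*k6*k9)*x1^2*x2^2)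
          = (s*K2*k3*k9*x1^2 - K1*K3*k6*k12*x2^2)^2
            + (K1*K4*K2^2*k3^2*k9^2*x1^4 - s^2*K2^2*k3^2*k9^2*x1^4)
            + K1*(((K2 + K3)*k3*k12 - (K1 + K4)*k6*k9) + 2*s*k6*k9)*(K2*K3*k3*k12*x1^2*x2^2) := by
        ring
      have hKG : 0 < K1 * (K2^2*K4*k3^2*k9^2*x1^4 + K1*K3^2*k6^2*k12^2*x2^4
          + K2*K3*k3*k12*((K2 + K3)*k3*k12 - (K1 + K4)*k6*k9)*x1^2*x2^2) := by
        rw [idA]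
        have h1 := sq_nonneg (s*K2*k3*k9*x1^2 - K1*K3*k6*k12*x2^2)
        have h2 := mul_pos (mul_pos hK1 hb2) hT
        linarith [e]
      have hG : 0 < K2^2*K4*k3^2*k9^2*x1^4 + K1*K3^2*k6^2*k12^2*x2^4
          + K2*K3*k3*k12*((K2 + K3)*k3*k12 - (K1 + K4)*k6*k9)*x1^2*x2^2 := by
        by_contra hcon
        push_neg at hcon
        nlinarith [hKG, mul_nonneg hK1.le (neg_nonneg.mpr hcon)]
      have hGrp : 0 < K1*k6*x3 * (K2^2*K4*k3^2*k9^2*x1^4 + K1*K3^2*k6^2*k12^2*x2^4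
          + K2*K3*k3*k12*((K2 + K3)*k3*k12 - (K1 + K4)*k6*k9)*x1^2*x2^2) :=
        mul_pos (by positivity) hG
      linarith [hGrp, ta1, ta3, ta4, ta6, ta8, t5, t7, t10, t11, t12, t13, t15]
    · -- case B : -b < 2√(a K2 K3 k3 k12)
      set s := Real.sqrt ((k3*k12 - k6*k9)*K2*K3*k3*k12) with hsdef
      have hs2 : s^2 = (k3*k12 - k6*k9)*K2*K3*k3*k12 :=
        Real.sq_sqrt (by
          have : (0:ℝ) ≤ (k3*k12 - k6*k9) * (K2*K3*k3*k12) := mul_nonneg ha (by positivity)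
          linarith [this] )
      have hb2 : 0 < ((K2 + K3)*k3*k12 - (K1 + K4)*k6*k9) + 2*s := by linarith
      have hT : (0:ℝ) < K1*K2*K3*k3*k6*k12*x1^2*x2^2*x3 := by positivity
      have hsq : 0 ≤ x1*x2*(s*K2*k3*x1*x3 - K1*K2*K3*k3*k6*k12*x2)^2 :=
        mul_nonneg (mul_nonneg hx1.le hx2.le) (sq_nonneg _)
      have e2 : s^2*K2^2*k3^2*x1^3*x2*x3^2
          = (k3*k12 - k6*k9)*K2^3*K3*k3^3*k12*x1^3*x2*x3^2 := by
        linear_combination (K2^2*k3^2*x1^3*x2*x3^2) * hs2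
      have idB : K2*k3 * (K2^2*K3*k3^2*k12*(k3*k12 - k6*k9)*x1^3*x2*x3^2
            + K1^2*K2*K3^2*k3*k6^2*k12^2*x1*x2^3
            + K1*K2*K3*k3*k6*k12*((K2 + K3)*k3*k12 - (K1 + K4)*k6*k9)*x1^2*x2^2*x3)
          = x1*x2*(s*K2*k3*x1*x3 - K1*K2*K3*k3*k6*k12*x2)^2
            + ((k3*k12 - k6*k9)*K2^3*K3*k3^3*k12*x1^3*x2*x3^2 - s^2*K2^2*k3^2*x1^3*x2*x3^2)
            + K2*k3*(((K2 + K3)*k3*k12 - (K1 + K4)*k6*k9) + 2*s)*(K1*K2*K3*k3*k6*k12*x1^2*x2^2*x3) := by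
        ring
      have hKKey : 0 < K2*k3 * (K2^2*K3*k3^2*k12*(k3*k12 - k6*k9)*x1^3*x2*x3^2
          + K1^2*K2*K3^2*k3*k6^2*k12^2*x1*x2^3
          + K1*K2*K3*k3*k6*k12*((K2 + K3)*k3*k12 - (K1 + K4)*k6*k9)*x1^2*x2^2*x3) := by
        rw [idB]
        have h2 := mul_pos (mul_pos (mul_pos hK2 hk3) hb2) hT
        linarith [hsq, e2]
      have hKey : 0 < K2^2*K3*k3^2*k12*(k3*k12 - k6*k9)*x1^3*x2*x3^2
          + K1^2*K2*K3^2*k3*k6^2*k12^2*x1*x2^3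
          + K1*K2*K3*k3*k6*k12*((K2 + K3)*k3*k12 - (K1 + K4)*k6*k9)*x1^2*x2^2*x3 := by
        by_contra hcon
        push_neg at hcon
        nlinarith [hKKey, mul_nonneg (mul_pos hK2 hk3).le (neg_nonneg.mpr hcon)]
      linarith [hKey, ta1, ta3, ta6, ta8, t2, t5, t7, t10, t11, t12, t14, t15]
end

section
/- There exists a nonempty open set U ⊆ ℝ⁸_{>0} such that for every η = (K₁,K₂,K₃,K₄,k₃,k₆,k₉,k₁₂) ∈ U: a(η) = k₃k₁₂ − k₆k₉ > 0, b(η) = (K₂+K₃)k₃k₁₂ − (K₁+K₄)k₆k₉ < 0, and p_η(x) < 0 for some x ∈ ℝ³_{>0}. -/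
set_option maxRecDepth 40000 in
theorem stmt_14 :
    ∃ U : Set (ℝ × ℝ × ℝ × ℝ × ℝ × ℝ × ℝ × ℝ), IsOpen U ∧ U.Nonempty ∧
      ∀ η ∈ U, ∀ K1 K2 K3 K4 k3 k6 k9 k12 : ℝ,
        η = (K1, K2, K3, K4, k3, k6, k9, k12) →
        0 < K1 ∧ 0 < K2 ∧ 0 < K3 ∧ 0 < K4 ∧ 0 < k3 ∧ 0 < k6 ∧ 0 < k9 ∧ 0 < k12 ∧
        0 < k3*k12 - k6*k9 ∧
        (K2 + K3)*k3*k12 - (K1 + K4)*k6*k9 < 0 ∧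
        ∃ x1 x2 x3 : ℝ, 0 < x1 ∧ 0 < x2 ∧ 0 < x3 ∧
          pEta K1 K2 K3 K4 k3 k6 k9 k12 x1 x2 x3 < 0 := by
  refine ⟨{η : ℝ × ℝ × ℝ × ℝ × ℝ × ℝ × ℝ × ℝ |
      0 < η.1 ∧ 0 < η.2.1 ∧ 0 < η.2.2.1 ∧ 0 < η.2.2.2.1 ∧ 0 < η.2.2.2.2.1 ∧
      0 < η.2.2.2.2.2.1 ∧ 0 < η.2.2.2.2.2.2.1 ∧ 0 < η.2.2.2.2.2.2.2 ∧
      0 < η.2.2.2.2.1 * η.2.2.2.2.2.2.2 - η.2.2.2.2.2.1 * η.2.2.2.2.2.2.1 ∧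
      (η.2.1 + η.2.2.1) * η.2.2.2.2.1 * η.2.2.2.2.2.2.2
        - (η.1 + η.2.2.2.1) * η.2.2.2.2.2.1 * η.2.2.2.2.2.2.1 < 0 ∧
      pEta η.1 η.2.1 η.2.2.1 η.2.2.2.1 η.2.2.2.2.1 η.2.2.2.2.2.1
        η.2.2.2.2.2.2.1 η.2.2.2.2.2.2.2 10 1 100 < 0}, ?_, ?_, ?_⟩
  · repeat' apply IsOpen.and
    all_goals first
      | exact isOpen_lt continuous_const (by fun_prop)
      | exact isOpen_lt (by fun_prop) continuous_const
      | exact isOpen_lt (by unfold pEta; fun_prop) continuous_const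
  · refine ⟨(1000, 1, 1, 1, 1, 1, 1, 2), ?_⟩
    simp only [Set.mem_setOf_eq, pEta]
    norm_num
  · rintro η hη K1 K2 K3 K4 k3 k6 k9 k12 rfl
    obtain ⟨h1, h2, h3, h4, h5, h6, h7, h8, h9, h10, h11⟩ := hη
    exact ⟨h1, h2, h3, h4, h5, h6, h7, h8, h9, by linarith, 10, 1, 100,
      by norm_num, by norm_num, by norm_num, h11⟩
end

section
/- There exists a nonempty open set V ⊆ ℝ⁸_{>0} such that for every η ∈ V: a(η) ≥ 0, b(η) < 0, and p_η(x) > 0 for all x ∈ ℝ³_{>0}. -/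
set_option maxHeartbeats 4000000

theorem stmt_15 :
    ∃ V : Set (ℝ × ℝ × ℝ × ℝ × ℝ × ℝ × ℝ × ℝ), IsOpen V ∧ V.Nonempty ∧
      ∀ η ∈ V, ∀ K1 K2 K3 K4 k3 k6 k9 k12 : ℝ,
        η = (K1, K2, K3, K4, k3, k6, k9, k12) →
        0 < K1 ∧ 0 < K2 ∧ 0 < K3 ∧ 0 < K4 ∧ 0 < k3 ∧ 0 < k6 ∧ 0 < k9 ∧ 0 < k12 ∧
        0 ≤ k3*k12 - k6*k9 ∧
        (K2 + K3)*k3*k12 - (K1 + K4)*k6*k9 < 0 ∧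
        ∀ x1 x2 x3 : ℝ, 0 < x1 → 0 < x2 → 0 < x3 →
          0 < pEta K1 K2 K3 K4 k3 k6 k9 k12 x1 x2 x3 := by
  refine ⟨(Set.Ioo (1.9:ℝ) 2.1) ×ˢ ((Set.Ioo (0.45:ℝ) 0.55) ×ˢ ((Set.Ioo (0.45:ℝ) 0.55) ×ˢ
      ((Set.Ioo (1.9:ℝ) 2.1) ×ˢ ((Set.Ioo (1.9:ℝ) 2.1) ×ˢ ((Set.Ioo (0.9:ℝ) 1.1) ×ˢ
      ((Set.Ioo (0.9:ℝ) 1.1) ×ˢ (Set.Ioo (0.9:ℝ) 1.1))))))), ?_, ?_, ?_⟩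
  · exact isOpen_Ioo.prod (isOpen_Ioo.prod (isOpen_Ioo.prod (isOpen_Ioo.prod
      (isOpen_Ioo.prod (isOpen_Ioo.prod (isOpen_Ioo.prod isOpen_Ioo))))))
  · exact ⟨(2, 0.5, 0.5, 2, 2, 1, 1, 1), by norm_num [Set.mem_prod, Set.mem_Ioo]⟩
  · rintro η hη K1 K2 K3 K4 k3 k6 k9 k12 rfl
    simp only [Set.mem_prod, Set.mem_Ioo] at hη
    obtain ⟨⟨hK1l, hK1u⟩, ⟨hK2l, hK2u⟩, ⟨hK3l, hK3u⟩, ⟨hK4l, hK4u⟩, ⟨hk3l, hk3u⟩,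
      ⟨hk6l, hk6u⟩, ⟨hk9l, hk9u⟩, hk12l, hk12u⟩ := hη
    have hK1 : (0:ℝ) < K1 := by linarith
    have hK2 : (0:ℝ) < K2 := by linarith
    have hK3 : (0:ℝ) < K3 := by linarith
    have hK4 : (0:ℝ) < K4 := by linarith
    have hk3 : (0:ℝ) < k3 := by linarith
    have hk6 : (0:ℝ) < k6 := by linarith
    have hk9 : (0:ℝ) < k9 := by linarith
    have hk12 : (0:ℝ) < k12 := by linarith
    have m1 : (1.71:ℝ) < k3*k12 := by
      nlinarith [mul_pos (show (0:ℝ) < k3 - 1.9 by linarith) (show (0:ℝ) < k12 - 0.9 by linarith)]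
    have m2 : k6*k9 < 1.21 := by
      nlinarith [mul_pos (show (0:ℝ) < 1.1 - k6 by linarith) (show (0:ℝ) < 1.1 - k9 by linarith)]
    have m3 : (K2 + K3)*(k3*k12) < 2.541 := by
      nlinarith [mul_pos (show (0:ℝ) < 1.1 - (K2 + K3) by linarith) (show (0:ℝ) < 2.31 - k3*k12 by nlinarith [mul_pos (show (0:ℝ) < 2.1 - k3 by linarith) (show (0:ℝ) < 1.1 - k12 by linarith)])]
    have m4 : (0.81:ℝ) < k6*k9 := by
      nlinarith [mul_pos (show (0:ℝ) < k6 - 0.9 by linarith) (show (0:ℝ) < k9 - 0.9 by linarith)]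
    have m5 : (3.078:ℝ) < (K1 + K4)*(k6*k9) := by
      nlinarith [mul_pos (show (0:ℝ) < (K1 + K4) - 3.8 by linarith) (show (0:ℝ) < k6*k9 - 0.81 by linarith)]
    have m6 : (K1 + K4)*(k6*k9) < 5.082 := by
      nlinarith [mul_pos (show (0:ℝ) < 4.2 - (K1 + K4) by linarith) (show (0:ℝ) < 1.21 - k6*k9 by linarith)]
    have hA : (0:ℝ) < k3*k12 - k6*k9 := by linarith
    have hB : (K2 + K3)*k3*k12 - (K1 + K4)*k6*k9 < 0 := by nlinarith
    refine ⟨hK1, hK2, hK3, hK4, hk3, hk6, hk9, hk12, le_of_lt hA, hB, ?_⟩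
    intro x1 x2 x3 hx1 hx2 hx3
    have h1 : (6.25:ℝ) ≤ 2*K4*k3*k9 := by
      nlinarith [mul_pos (show (0:ℝ) < K4*k3 - 3.61 by nlinarith [mul_pos (show (0:ℝ) < K4 - 1.9 by linarith) (show (0:ℝ) < k3 - 1.9 by linarith)]) (show (0:ℝ) < k9 - 0.9 by linarith)]
    have h2 : (2.89:ℝ) ≤ 2*K1*k6*k12 := by
      nlinarith [mul_pos (show (0:ℝ) < K1*k6 - 1.71 by nlinarith [mul_pos (show (0:ℝ) < K1 - 1.9 by linarith) (show (0:ℝ) < k6 - 0.9 by linarith)]) (show (0:ℝ) < k12 - 0.9 by linarith)]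
    have h3 : (-8.5:ℝ) ≤ (K2 + K3)*k3*k12 - (K1 + K4)*k6*k9 := by
      have hpos : (0:ℝ) < (K2 + K3)*(k3*k12) := by positivity
      nlinarith
    have hQ : 0 ≤ 2*K4*k3*k9*x1^2 + ((K2 + K3)*k3*k12 - (K1 + K4)*k6*k9)*x1*x2
        + 2*K1*k6*k12*x2^2 := by
      nlinarith [sq_nonneg (2.5*x1 - 1.7*x2), sq_nonneg x1, sq_nonneg x2, mul_pos hx1 hx2]
    have hdec : pEta K1 K2 K3 K4 k3 k6 k9 k12 x1 x2 x3 =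
        K1*K2*K3*k3*k6*k12*(x1*x2*x3)*
          (2*K4*k3*k9*x1^2 + ((K2 + K3)*k3*k12 - (K1 + K4)*k6*k9)*x1*x2 + 2*K1*k6*k12*x2^2)
        + (k3*k12 - k6*k9) *
          (K2^2*K4*k3^2*k9*x1^4*x3^2 + K1*K2*K3*k3*k6*k12*x1^3*x2^2*x3
            + K2^2*K3*k3^2*k12*x1^3*x2*x3^2 + K1*K2*K3*k3*k6*k12*x1^2*x2^3*x3
            + K1*K2*K3*k3*k6*k12*x1^2*x2^2*x3^2)
        + (K1*K2^2*K4*k3^2*k6*k9^2*x1^4*x3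
            + K1^2*K2*K3*k3*k6^2*k12*(k9 + k12)*x1^2*x2^3
            + K1^2*K2*K3*K4*k3*k6^2*k9*k12*x1^2*x2^2
            + K1^2*K3^2*k6^2*k12^2*(k3 + k6)*x1*x2^4
            + K1^2*K2*K3^2*k3*k6^2*k12^2*x1*x2^3
            + K1^2*K3^2*k6^3*k12^2*x2^4*x3
            + K1^3*K3^2*k6^3*k12^2*x2^4) := by
      unfold pEta; ring
    rw [hdec]
    have t1 : 0 ≤ K1*K2*K3*k3*k6*k12*(x1*x2*x3)*
        (2*K4*k3*k9*x1^2 + ((K2 + K3)*k3*k12 - (K1 + K4)*k6*k9)*x1*x2 + 2*K1*k6*k12*x2^2) := by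
      have : 0 < K1*K2*K3*k3*k6*k12*(x1*x2*x3) := by positivity
      exact mul_nonneg this.le hQ
    have t2 : 0 < (k3*k12 - k6*k9) *
        (K2^2*K4*k3^2*k9*x1^4*x3^2 + K1*K2*K3*k3*k6*k12*x1^3*x2^2*x3
          + K2^2*K3*k3^2*k12*x1^3*x2*x3^2 + K1*K2*K3*k3*k6*k12*x1^2*x2^3*x3
          + K1*K2*K3*k3*k6*k12*x1^2*x2^2*x3^2) := by
      apply mul_pos hA; positivity
    have t3 : 0 < K1*K2^2*K4*k3^2*k6*k9^2*x1^4*x3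
        + K1^2*K2*K3*k3*k6^2*k12*(k9 + k12)*x1^2*x2^3
        + K1^2*K2*K3*K4*k3*k6^2*k9*k12*x1^2*x2^2
        + K1^2*K3^2*k6^2*k12^2*(k3 + k6)*x1*x2^4
        + K1^2*K2*K3^2*k3*k6^2*k12^2*x1*x2^3
        + K1^2*K3^2*k6^3*k12^2*x2^4*x3
        + K1^3*K3^2*k6^3*k12^2*x2^4 := by positivity
    linarith
end
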